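/- Let $0 < \delta \le 1$, let $(p_1,\dots,p_n)$ be a probability vector, let $X_1,\dots,X_l$ be i.i.d. with law $p$, and let $Z = \sum_{1\le i<j\le l}\mathbf{1}(X_i = X_j)$. Suppose that $\frac{1}{\mathbf{E}(Z)} \le \frac{\delta^2}{512}$, that $\frac{2\sqrt{n}}{l} \le \frac{\delta^2}{512}$, and that $n\sum_{i=1}^n p_i^2 \ge 1 + \delta$. Then $\mathbf{P}\left(Z \le \binom{l}{2}\frac{1}{n}\left(1 + \frac{\delta}{2}\right)\right) \le \frac{1}{4}$. -/

import Mathlib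

open MeasureTheory ProbabilityTheory Finset

section Aux

variable {Ω : Type*} [MeasureSpace Ω] [IsProbabilityMeasure (ℙ : Measure Ω)]
  {n l : ℕ} {p : Fin n → ℝ}
  {X : Fin l → Ω → Fin n}

lemma bday_prod (hindep : iIndepFun X ℙ)
    (hdist : ∀ k i, ℙ {ω | X k ω = i} = ENNReal.ofReal (p i))
    (S : Finset (Fin l)) (a : Fin l → Fin n) :
    ℙ (⋂ k ∈ S, X k ⁻¹' {a k}) = ∏ k ∈ S, ENNReal.ofReal (p (a k)) := by
  rw [hindep.measure_inter_preimage_eq_mul S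
    (sets := fun k => {a k}) (fun k _ => measurableSet_singleton (a k))]
  exact Finset.prod_congr rfl fun k _ => hdist k (a k)

lemma bday_pair (hmeas : ∀ k, Measurable (X k))
    (hindep : iIndepFun X ℙ)
    (hdist : ∀ k i, ℙ {ω | X k ω = i} = ENNReal.ofReal (p i))
    (hp0 : ∀ i, 0 ≤ p i)
    {i j : Fin l} (hij : i ≠ j) :
    ℙ {ω | X i ω = X j ω} = ENNReal.ofReal (∑ a, (p a)^2) := by
  have hset : {ω | X i ω = X j ω} = ⋃ a : Fin n, (X i ⁻¹' {a} ∩ X j ⁻¹' {a}) := by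
    ext ω
    simp only [Set.mem_setOf_eq, Set.mem_iUnion, Set.mem_inter_iff, Set.mem_preimage,
      Set.mem_singleton_iff]
    constructor
    · intro h; exact ⟨X j ω, h, rfl⟩
    · rintro ⟨a, h1, h2⟩; rw [h1, h2]
  rw [hset, measure_iUnion ?_ ?_]
  · rw [tsum_fintype]
    have : ∀ a : Fin n, ℙ (X i ⁻¹' {a} ∩ X j ⁻¹' {a}) = ENNReal.ofReal ((p a)^2) := by
      intro a
      have h2 : (X i ⁻¹' {a} ∩ X j ⁻¹' {a}) = ⋂ k ∈ ({i, j} : Finset (Fin l)), X k ⁻¹' {(fun _ => a) k} := by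
        simp [Finset.set_biInter_insert]
      rw [h2, bday_prod hindep hdist, Finset.prod_pair hij, ← ENNReal.ofReal_mul (hp0 a), sq]
    rw [Finset.sum_congr rfl fun a _ => this a, ← ENNReal.ofReal_sum_of_nonneg]
    intro a _; positivity
  · intro a b hab
    simp only [Set.disjoint_left]
    rintro ω ⟨h1, _⟩ ⟨h3, _⟩
    exact hab (by rw [← h1, ← h3])
  · exact fun a => ((hmeas i) (measurableSet_singleton a)).inter ((hmeas j) (measurableSet_singleton a))

lemma bday_triple (hmeas : ∀ k, Measurable (X k))
    (hindep : iIndepFun X ℙ)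
    (hdist : ∀ k i, ℙ {ω | X k ω = i} = ENNReal.ofReal (p i))
    (hp0 : ∀ i, 0 ≤ p i)
    {u v w : Fin l} (huv : u ≠ v) (huw : u ≠ w) (hvw : v ≠ w) :
    ℙ {ω | X u ω = X v ω ∧ X u ω = X w ω} = ENNReal.ofReal (∑ a, (p a)^3) := by
  have hset : {ω | X u ω = X v ω ∧ X u ω = X w ω}
      = ⋃ a : Fin n, (X u ⁻¹' {a} ∩ (X v ⁻¹' {a} ∩ X w ⁻¹' {a})) := by
    ext ω
    simp only [Set.mem_setOf_eq, Set.mem_iUnion, Set.mem_inter_iff, Set.mem_preimage,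
      Set.mem_singleton_iff]
    constructor
    · rintro ⟨h1, h2⟩; exact ⟨X u ω, rfl, h1.symm, h2.symm⟩
    · rintro ⟨a, h1, h2, h3⟩; rw [h1, h2, h3]; exact ⟨rfl, rfl⟩
  rw [hset, measure_iUnion ?_ ?_]
  · rw [tsum_fintype]
    have : ∀ a : Fin n, ℙ (X u ⁻¹' {a} ∩ (X v ⁻¹' {a} ∩ X w ⁻¹' {a}))
        = ENNReal.ofReal ((p a)^3) := by
      intro a
      have h2 : (X u ⁻¹' {a} ∩ (X v ⁻¹' {a} ∩ X w ⁻¹' {a}))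
          = ⋂ k ∈ ({u, v, w} : Finset (Fin l)), X k ⁻¹' {(fun _ => a) k} := by
        simp [Finset.set_biInter_insert]
      rw [h2, bday_prod hindep hdist]
      rw [Finset.prod_insert (by simp [huv, huw]), Finset.prod_pair hvw,
        show (p a)^3 = p a * (p a * p a) from by ring,
        ENNReal.ofReal_mul (hp0 a), ENNReal.ofReal_mul (hp0 a)]
    rw [Finset.sum_congr rfl fun a _ => this a, ← ENNReal.ofReal_sum_of_nonneg]
    intro a _; exact pow_nonneg (hp0 a) 3
  · intro a b hab
    simp only [Set.disjoint_left]
    rintro ω ⟨h1, _⟩ ⟨h3, _⟩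
    exact hab (by rw [← h1, ← h3])
  · exact fun a => ((hmeas u) (measurableSet_singleton a)).inter
      (((hmeas v) (measurableSet_singleton a)).inter ((hmeas w) (measurableSet_singleton a)))

lemma bday_quad (hmeas : ∀ k, Measurable (X k))
    (hindep : iIndepFun X ℙ)
    (hdist : ∀ k i, ℙ {ω | X k ω = i} = ENNReal.ofReal (p i))
    (hp0 : ∀ i, 0 ≤ p i)
    {i j k m : Fin l} (hij : i ≠ j) (hkm : k ≠ m)
    (hik : i ≠ k) (him : i ≠ m) (hjk : j ≠ k) (hjm : j ≠ m) :
    ℙ {ω | X i ω = X j ω ∧ X k ω = X m ω}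
      = ENNReal.ofReal (∑ a, (p a)^2) * ENNReal.ofReal (∑ a, (p a)^2) := by
  have hset : {ω | X i ω = X j ω ∧ X k ω = X m ω}
      = ⋃ ab : Fin n × Fin n,
        ((X i ⁻¹' {ab.1} ∩ X j ⁻¹' {ab.1}) ∩ (X k ⁻¹' {ab.2} ∩ X m ⁻¹' {ab.2})) := by
    ext ω
    simp only [Set.mem_setOf_eq, Set.mem_iUnion, Set.mem_inter_iff, Set.mem_preimage,
      Set.mem_singleton_iff]
    constructor
    · rintro ⟨h1, h2⟩; exact ⟨(X i ω, X k ω), ⟨rfl, h1.symm⟩, rfl, h2.symm⟩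
    · rintro ⟨ab, ⟨h1, h2⟩, h3, h4⟩; rw [h1, h2, h3, h4]; exact ⟨rfl, rfl⟩
  rw [hset, measure_iUnion ?_ ?_]
  · rw [tsum_fintype]
    have key : ∀ ab : Fin n × Fin n,
        ℙ ((X i ⁻¹' {ab.1} ∩ X j ⁻¹' {ab.1}) ∩ (X k ⁻¹' {ab.2} ∩ X m ⁻¹' {ab.2}))
        = ENNReal.ofReal ((p ab.1)^2) * ENNReal.ofReal ((p ab.2)^2) := by
      rintro ⟨a, b⟩
      have h2 : ((X i ⁻¹' {a} ∩ X j ⁻¹' {a}) ∩ (X k ⁻¹' {b} ∩ X m ⁻¹' {b}))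
          = ⋂ z ∈ ({i, j, k, m} : Finset (Fin l)),
              X z ⁻¹' {(fun z => if z = k ∨ z = m then b else a) z} := by
        ext ω
        simp only [Finset.set_biInter_insert, Finset.set_biInter_singleton,
          Set.mem_inter_iff, Set.mem_preimage, Set.mem_singleton_iff]
        simp [hik, him, hjk, hjm]
        tauto
      rw [h2, bday_prod hindep hdist]
      rw [Finset.prod_insert (by simp [hij, hik, him]),
        Finset.prod_insert (by simp [hjk, hjm]), Finset.prod_pair hkm]
      simp [hik, him, hjk, hjm]
      rw [sq, sq, ENNReal.ofReal_mul (hp0 a), ENNReal.ofReal_mul (hp0 b)]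
      ring
    have hsum2 : ∑ ab : Fin n × Fin n,
        ℙ ((X i ⁻¹' {ab.1} ∩ X j ⁻¹' {ab.1}) ∩ (X k ⁻¹' {ab.2} ∩ X m ⁻¹' {ab.2}))
        = ∑ x : Fin n, ∑ y : Fin n, ENNReal.ofReal ((p x)^2) * ENNReal.ofReal ((p y)^2) := by
      rw [Fintype.sum_prod_type]
      exact Finset.sum_congr rfl fun x _ => Finset.sum_congr rfl fun y _ => key (x, y)
    rw [hsum2, ENNReal.ofReal_sum_of_nonneg fun a _ => sq_nonneg (p a)]
    exact (Finset.sum_mul_sum _ _ _ _).symm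
  · rintro ⟨a, b⟩ ⟨a', b'⟩ hab
    simp only [Set.disjoint_left]
    rintro ω ⟨⟨h1, _⟩, h2, _⟩ ⟨⟨h3, _⟩, h4, _⟩
    simp only [Set.mem_preimage, Set.mem_singleton_iff] at h1 h2 h3 h4
    exact hab (by simp [Prod.ext_iff, ← h1, ← h3, ← h2, ← h4])
  · rintro ⟨a, b⟩
    exact (((hmeas i) (measurableSet_singleton a)).inter ((hmeas j) (measurableSet_singleton a))).inter
      (((hmeas k) (measurableSet_singleton b)).inter ((hmeas m) (measurableSet_singleton b)))

end Aux
set_option maxHeartbeats 1000000 in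
theorem birthday_failure_prob_le_quarter
    {Ω : Type*} [MeasureSpace Ω] [IsProbabilityMeasure (ℙ : Measure Ω)]
    (n l : ℕ) (hn : 1 ≤ n) (hl : 2 ≤ l)
    (δ : ℝ) (hδ0 : 0 < δ) (hδ1 : δ ≤ 1)
    (p : Fin n → ℝ) (hp0 : ∀ i, 0 ≤ p i) (hp1 : ∑ i, p i = 1)
    (X : Fin l → Ω → Fin n) (hmeas : ∀ k, Measurable (X k))
    (hindep : iIndepFun X ℙ)
    (hdist : ∀ k i, ℙ {ω | X k ω = i} = ENNReal.ofReal (p i))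
    (Z : Ω → ℝ)
    (hZ : Z = fun ω => ∑ i : Fin l, ∑ j : Fin l,
      if i < j ∧ X i ω = X j ω then (1 : ℝ) else 0)
    (hEZ : 1 / (∫ ω, Z ω) ≤ δ ^ 2 / 512)
    (hnl : 2 * Real.sqrt n / l ≤ δ ^ 2 / 512)
    (hfar : 1 + δ ≤ (n : ℝ) * ∑ i, (p i) ^ 2) :
    (ℙ {ω | Z ω ≤ (l.choose 2 : ℝ) * (1 / n) * (1 + δ / 2)}).toReal ≤ 1 / 4 := by
  classical
  set s : ℝ := ∑ i, (p i)^2 with hs_def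
  set t : ℝ := ∑ i, (p i)^3 with ht_def
  have hs0 : 0 ≤ s := Finset.sum_nonneg fun i _ => sq_nonneg _
  have ht0 : 0 ≤ t := Finset.sum_nonneg fun i _ => pow_nonneg (hp0 i) 3
  have hn0 : (0:ℝ) < n := by exact_mod_cast Nat.lt_of_lt_of_le Nat.zero_lt_one hn
  have hl0 : (2:ℝ) ≤ l := by exact_mod_cast hl
  have hns : 1 ≤ (n:ℝ) * s := le_trans (by linarith) hfar
  have hs_pos : 0 < s := by nlinarith
  have hsqs : Real.sqrt s * Real.sqrt s = s := Real.mul_self_sqrt hs0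
  have hsq_pos : 0 < Real.sqrt s := Real.sqrt_pos.mpr hs_pos
  have hts : t ≤ s * Real.sqrt s := by
    have hterm : ∀ i, (p i)^3 ≤ (p i)^2 * Real.sqrt s := by
      intro i
      have hpi : p i ≤ Real.sqrt s := by
        have h2 : (p i)^2 ≤ s :=
          Finset.single_le_sum (f := fun i => (p i)^2)
            (fun i _ => sq_nonneg (p i)) (Finset.mem_univ i)
        have h3 := Real.sqrt_le_sqrt h2
        rwa [Real.sqrt_sq (hp0 i)] at h3
      nlinarith [sq_nonneg (p i), hp0 i]
    calc t = ∑ i, (p i)^3 := ht_def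
      _ ≤ ∑ i, (p i)^2 * Real.sqrt s := Finset.sum_le_sum fun i _ => hterm i
      _ = s * Real.sqrt s := by rw [← Finset.sum_mul]
  have hss1 : 1 ≤ Real.sqrt n * Real.sqrt s := by
    rw [← Real.sqrt_mul (le_of_lt hn0)]
    have h1 := Real.sqrt_le_sqrt hns
    rwa [Real.sqrt_one] at h1
  -- events
  set A : Fin l × Fin l → Set Ω := fun q => {ω | q.1 < q.2 ∧ X q.1 ω = X q.2 ω} with hA_def
  have hA_meas : ∀ q, MeasurableSet (A q) := by
    intro q
    have : A q = {ω | q.1 < q.2} ∩ {ω | X q.1 ω = X q.2 ω} := by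
      ext ω; simp [hA_def, Set.mem_setOf_eq]
    rw [this]
    exact (MeasurableSet.const _).inter
      (measurableSet_eq_fun (hmeas _) (hmeas _))
  have hPA : ∀ q : Fin l × Fin l, ℙ (A q) = if q.1 < q.2 then ENNReal.ofReal s else 0 := by
    intro q; by_cases hq : q.1 < q.2
    · rw [if_pos hq]
      have hAq : A q = {ω | X q.1 ω = X q.2 ω} := by ext ω; simp [hA_def, hq]
      rw [hAq]
      exact bday_pair hmeas hindep hdist hp0 (ne_of_lt hq)
    · rw [if_neg hq]
      have hAq : A q = ∅ := by ext ω; simp [hA_def, hq]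
      simp [hAq]
  have hPA' : ∀ q, (ℙ (A q)).toReal = if q.1 < q.2 then s else 0 := by
    intro q; rw [hPA q]; split_ifs <;> simp [ENNReal.toReal_ofReal hs0]
  have hZ' : Z = fun ω => ∑ q : Fin l × Fin l, (A q).indicator (fun _ => (1:ℝ)) ω := by
    rw [hZ]; funext ω; rw [Fintype.sum_prod_type]
    refine Finset.sum_congr rfl fun i _ => Finset.sum_congr rfl fun j _ => ?_
    by_cases h : i < j ∧ X i ω = X j ω <;> simp [Set.indicator_apply, hA_def, h]
  have hint : ∀ B : Set Ω, MeasurableSet B →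
      Integrable (B.indicator (fun _ => (1:ℝ))) ℙ :=
    fun B hB => (integrable_const 1).indicator hB
  have hintval : ∀ B : Set Ω, MeasurableSet B →
      ∫ ω, B.indicator (fun _ => (1:ℝ)) ω = (ℙ B).toReal := by
    intro B hB
    exact integral_indicator_one hB
  set C : ℝ := (l.choose 2 : ℝ) with hC_def
  have hEZ_sum : ∫ ω, Z ω = ∑ q : Fin l × Fin l, (ℙ (A q)).toReal := by
    rw [hZ', integral_finset_sum _ (fun q _ => hint _ (hA_meas q))]
    exact Finset.sum_congr rfl fun q _ => hintval _ (hA_meas q)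
  have hcount : ∀ c : ℝ, ∑ q : Fin l × Fin l, (if q.1 < q.2 then c else 0) = C * c := by
    intro c
    have hcard : ∀ j : Fin l, (Finset.univ.filter fun i : Fin l => i < j).card = (j:ℕ) := by
      intro j
      have h1 : ∑ i : Fin l, (if i < j then (1:ℕ) else 0)
          = ∑ x ∈ Finset.range l, (if x ∈ Finset.range (j:ℕ) then 1 else 0) := by
        rw [← Fin.sum_univ_eq_sum_range (fun x => if x ∈ Finset.range (j:ℕ) then 1 else 0) l]
        exact Finset.sum_congr rfl fun i _ => by simp only [Fin.lt_def, Finset.mem_range]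
      rw [Finset.card_filter, h1, Finset.sum_ite_mem,
        Finset.inter_eq_right.mpr (Finset.range_subset_range.mpr (le_of_lt j.isLt)),
        Finset.sum_const, Finset.card_range, smul_eq_mul, mul_one]
    rw [Fintype.sum_prod_type, Finset.sum_comm]
    have h2 : ∀ j : Fin l, ∑ i : Fin l, (if i < j then c else 0) = ((j:ℕ):ℝ) * c := by
      intro j
      rw [Finset.sum_ite, Finset.sum_const, Finset.sum_const_zero, add_zero,
        nsmul_eq_mul, hcard j]
    rw [Finset.sum_congr rfl fun j _ => h2 j, ← Finset.sum_mul]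
    congr 1
    rw [hC_def]
    norm_cast
    rw [Fin.sum_univ_eq_sum_range (fun x => x) l, Finset.sum_range_id, Nat.choose_two_right]
  have hEZ_eq : ∫ ω, Z ω = C * s := by
    rw [hEZ_sum, Finset.sum_congr rfl fun q _ => hPA' q, hcount]
  -- Memℒp
  have hZmeas : Measurable Z := by
    rw [hZ']
    exact Finset.measurable_sum _ fun q _ => measurable_const.indicator (hA_meas q)
  have hmem : MemLp Z 2 ℙ := by
    refine MemLp.of_bound hZmeas.aestronglyMeasurable ((Fintype.card (Fin l × Fin l) : ℝ))
      (ae_of_all _ fun ω => ?_)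
    rw [hZ']
    rw [Real.norm_eq_abs, abs_of_nonneg (Finset.sum_nonneg fun q _ =>
      Set.indicator_nonneg (fun _ _ => zero_le_one) ω)]
    calc ∑ q : Fin l × Fin l, (A q).indicator (fun _ => (1:ℝ)) ω
        ≤ ∑ _q : Fin l × Fin l, (1:ℝ) := by
          refine Finset.sum_le_sum fun q _ => ?_
          by_cases h : ω ∈ A q <;> simp [Set.indicator_apply, h]
      _ = (Fintype.card (Fin l × Fin l) : ℝ) := by
          rw [Finset.sum_const, Finset.card_univ, nsmul_eq_mul, mul_one]
  -- second moment
  have hZsq : ∫ ω, (Z ω)^2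
      = ∑ q : Fin l × Fin l, ∑ r : Fin l × Fin l, (ℙ (A q ∩ A r)).toReal := by
    have hfun : (fun ω => (Z ω)^2)
        = fun ω => ∑ q : Fin l × Fin l, ∑ r : Fin l × Fin l,
            ((A q ∩ A r).indicator (fun _ => (1:ℝ)) ω) := by
      funext ω
      rw [hZ', sq, Finset.sum_mul_sum]
      refine Finset.sum_congr rfl fun q _ => Finset.sum_congr rfl fun r _ => ?_
      rw [← Set.inter_indicator_mul]
      simp [Set.indicator_apply]
    rw [show ∫ ω, (Z ω)^2 = ∫ ω, (fun ω => (Z ω)^2) ω from rfl, hfun]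
    rw [integral_finset_sum _ (fun q _ => integrable_finset_sum _
      (fun r _ => hint _ ((hA_meas q).inter (hA_meas r))))]
    refine Finset.sum_congr rfl fun q _ => ?_
    rw [integral_finset_sum _ (fun r _ => hint _ ((hA_meas q).inter (hA_meas r)))]
    exact Finset.sum_congr rfl fun r _ => hintval _ ((hA_meas q).inter (hA_meas r))
  have hvar_sum : variance Z ℙ = ∑ q : Fin l × Fin l, ∑ r : Fin l × Fin l,
      ((ℙ (A q ∩ A r)).toReal - (ℙ (A q)).toReal * (ℙ (A r)).toReal) := by
    have h1 : variance Z ℙ = (∫ ω, (Z ω)^2) - (∫ ω, Z ω)^2 := by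
      have h2 := variance_eq_sub (μ := ℙ) hmem
      simpa using h2
    rw [h1, hZsq, hEZ_sum, sq, Finset.sum_mul_sum, ← Finset.sum_sub_distrib]
    exact Finset.sum_congr rfl fun q _ => (Finset.sum_sub_distrib _ _).symm
  -- termwise bound
  set g : (Fin l × Fin l) → (Fin l × Fin l) → ℝ := fun q r =>
    if q.1 < q.2 ∧ r.1 < r.2 then
      (if r = q then s else
        if r.1 = q.1 ∨ r.1 = q.2 ∨ r.2 = q.1 ∨ r.2 = q.2 then t else 0)
    else 0 with hg_def
  have hmemQ : ∀ (q : Fin l × Fin l) ω, ω ∈ A q → X q.1 ω = X q.2 ω := by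
    intro q ω h
    simp only [hA_def, Set.mem_setOf_eq] at h
    exact h.2
  have hterm : ∀ q r : Fin l × Fin l,
      (ℙ (A q ∩ A r)).toReal - (ℙ (A q)).toReal * (ℙ (A r)).toReal ≤ g q r := by
    intro q r
    simp only [hg_def]
    by_cases h1 : q.1 < q.2
    · by_cases h2 : r.1 < r.2
      · rw [if_pos ⟨h1, h2⟩]
        have hq12 : q.1 ≠ q.2 := ne_of_lt h1
        have hr12 : r.1 ≠ r.2 := ne_of_lt h2
        by_cases hqr : r = q
        · rw [if_pos hqr, hqr, Set.inter_self, hPA' q, if_pos h1]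
          nlinarith
        · rw [if_neg hqr]
          by_cases htouch : r.1 = q.1 ∨ r.1 = q.2 ∨ r.2 = q.1 ∨ r.2 = q.2
          · rw [if_pos htouch]
            have hsub : ℙ (A q ∩ A r) ≤ ENNReal.ofReal t := by
              rcases htouch with h | h | h | h
              · -- r.1 = q.1 ; triple (q.1, q.2, r.2)
                have hne1 : q.1 ≠ r.2 := by rw [← h]; exact ne_of_lt h2
                have hne2 : q.2 ≠ r.2 := fun hc => hqr (Prod.ext h hc.symm)
                refine le_trans (measure_mono ?_)
                  (le_of_eq (bday_triple hmeas hindep hdist hp0 hq12 hne1 hne2))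
                rintro ω ⟨ha, hb⟩
                refine ⟨hmemQ q ω ha, ?_⟩
                rw [← h]; exact hmemQ r ω hb
              · -- r.1 = q.2 ; triple (q.1, q.2, r.2)
                have hq2r2 : q.2 < r.2 := by rw [← h]; exact h2
                have hne1 : q.1 ≠ r.2 := ne_of_lt (lt_trans h1 hq2r2)
                have hne2 : q.2 ≠ r.2 := ne_of_lt hq2r2
                refine le_trans (measure_mono ?_)
                  (le_of_eq (bday_triple hmeas hindep hdist hp0 hq12 hne1 hne2))
                rintro ω ⟨ha, hb⟩
                have hb' : X q.2 ω = X r.2 ω := by rw [← h]; exact hmemQ r ω hb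
                exact ⟨hmemQ q ω ha, (hmemQ q ω ha).trans hb'⟩
              · -- r.2 = q.1 ; triple (q.1, q.2, r.1)
                have hr1q1 : r.1 < q.1 := by rw [← h]; exact h2
                have hne1 : q.1 ≠ r.1 := (ne_of_lt hr1q1).symm
                have hne2 : q.2 ≠ r.1 := (ne_of_lt (lt_trans hr1q1 h1)).symm
                refine le_trans (measure_mono ?_)
                  (le_of_eq (bday_triple hmeas hindep hdist hp0 hq12 hne1 hne2))
                rintro ω ⟨ha, hb⟩
                have hb' : X q.1 ω = X r.1 ω := by rw [← h]; exact (hmemQ r ω hb).symm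
                exact ⟨hmemQ q ω ha, hb'⟩
              · -- r.2 = q.2 ; triple (q.2, q.1, r.1)
                have hne0 : r.1 ≠ q.1 := fun hc => hqr (Prod.ext hc h)
                have hr1q2 : r.1 < q.2 := by rw [← h]; exact h2
                have hne1 : q.2 ≠ q.1 := hq12.symm
                have hne2 : q.2 ≠ r.1 := (ne_of_lt hr1q2).symm
                have hne3 : q.1 ≠ r.1 := hne0.symm
                refine le_trans (measure_mono ?_)
                  (le_of_eq (bday_triple hmeas hindep hdist hp0 hne1 hne2 hne3))
                rintro ω ⟨ha, hb⟩
                have hb' : X q.2 ω = X r.1 ω := by rw [← h]; exact (hmemQ r ω hb).symm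
                exact ⟨(hmemQ q ω ha).symm, hb'⟩
            have h3 : (ℙ (A q ∩ A r)).toReal ≤ t := by
              have h4 := ENNReal.toReal_mono ENNReal.ofReal_ne_top hsub
              rwa [ENNReal.toReal_ofReal ht0] at h4
            have h5 : 0 ≤ (ℙ (A q)).toReal * (ℙ (A r)).toReal := by positivity
            linarith
          · rw [if_neg htouch]
            push_neg at htouch
            obtain ⟨ha1, ha2, ha3, ha4⟩ := htouch
            have hinter : A q ∩ A r
                = {ω | X q.1 ω = X q.2 ω ∧ X r.1 ω = X r.2 ω} := by
              ext ω
              simp only [hA_def, Set.mem_inter_iff, Set.mem_setOf_eq]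
              constructor
              · rintro ⟨⟨_, hx⟩, ⟨_, hy⟩⟩; exact ⟨hx, hy⟩
              · rintro ⟨hx, hy⟩; exact ⟨⟨h1, hx⟩, ⟨h2, hy⟩⟩
            rw [hinter, bday_quad hmeas hindep hdist hp0 hq12 hr12
              ha1.symm ha3.symm ha2.symm ha4.symm]
            rw [hPA' q, hPA' r, if_pos h1, if_pos h2, ENNReal.toReal_mul]
            simp only [← hs_def, ENNReal.toReal_ofReal hs0]
            linarith
      · rw [if_neg (fun hc => h2 hc.2)]
        have hAr : A r = ∅ := by
          ext ω; simp only [hA_def, Set.mem_setOf_eq]; simp [h2]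
        rw [hAr]
        simp
    · rw [if_neg (fun hc => h1 hc.1)]
      have hAq : A q = ∅ := by
        ext ω; simp only [hA_def, Set.mem_setOf_eq]; simp [h1]
      rw [hAq]
      simp
  have hg_sum : ∑ q : Fin l × Fin l, ∑ r : Fin l × Fin l, g q r
      ≤ C * (s + 4*((l:ℝ)-1)*t) := by
    have hcard_gt : ∀ i : Fin l,
        ((Finset.univ.filter fun m : Fin l => i < m).card : ℝ) ≤ (l:ℝ) - 1 := by
      intro i
      have hss : (Finset.univ.filter fun m : Fin l => i < m) ⊆ Finset.univ.erase i := by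
        intro m hm
        rw [Finset.mem_filter] at hm
        exact Finset.mem_erase.mpr ⟨(ne_of_lt hm.2).symm, Finset.mem_univ m⟩
      have h2 := Finset.card_le_card hss
      rw [Finset.card_erase_of_mem (Finset.mem_univ i), Finset.card_univ,
        Fintype.card_fin] at h2
      have h3 : ((Finset.univ.filter fun m : Fin l => i < m).card : ℝ)
          ≤ ((l - 1 : ℕ) : ℝ) := by exact_mod_cast h2
      rwa [Nat.cast_sub (by omega), Nat.cast_one] at h3
    have hcard_lt : ∀ i : Fin l,
        ((Finset.univ.filter fun m : Fin l => m < i).card : ℝ) ≤ (l:ℝ) - 1 := by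
      intro i
      have hss : (Finset.univ.filter fun m : Fin l => m < i) ⊆ Finset.univ.erase i := by
        intro m hm
        rw [Finset.mem_filter] at hm
        exact Finset.mem_erase.mpr ⟨ne_of_lt hm.2, Finset.mem_univ m⟩
      have h2 := Finset.card_le_card hss
      rw [Finset.card_erase_of_mem (Finset.mem_univ i), Finset.card_univ,
        Fintype.card_fin] at h2
      have h3 : ((Finset.univ.filter fun m : Fin l => m < i).card : ℝ)
          ≤ ((l - 1 : ℕ) : ℝ) := by exact_mod_cast h2
      rwa [Nat.cast_sub (by omega), Nat.cast_one] at h3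
    have hsum1 : ∀ i : Fin l, ∑ m : Fin l, (if i < m then t else 0) ≤ ((l:ℝ)-1) * t := by
      intro i
      rw [Finset.sum_ite, Finset.sum_const, Finset.sum_const_zero, add_zero, nsmul_eq_mul]
      exact mul_le_mul_of_nonneg_right (hcard_gt i) ht0
    have hsum2 : ∀ i : Fin l, ∑ m : Fin l, (if m < i then t else 0) ≤ ((l:ℝ)-1) * t := by
      intro i
      rw [Finset.sum_ite, Finset.sum_const, Finset.sum_const_zero, add_zero, nsmul_eq_mul]
      exact mul_le_mul_of_nonneg_right (hcard_lt i) ht0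
    have hinner : ∀ q : Fin l × Fin l, ∑ r : Fin l × Fin l, g q r ≤
        (if q.1 < q.2 then s + 4*((l:ℝ)-1)*t else 0) := by
      intro q
      by_cases hq : q.1 < q.2
      · rw [if_pos hq]
        have hpt : ∀ r : Fin l × Fin l, g q r ≤
            (if r = q then s else 0)
            + ((if r.1 = q.1 ∧ r.1 < r.2 then t else 0)
              + (if r.1 = q.2 ∧ r.1 < r.2 then t else 0)
              + (if r.2 = q.1 ∧ r.1 < r.2 then t else 0)
              + (if r.2 = q.2 ∧ r.1 < r.2 then t else 0)) := by
          intro r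
          simp only [hg_def]
          by_cases h2 : r.1 < r.2
          · by_cases hqr : r = q
            · rw [if_pos ⟨hq, h2⟩, if_pos hqr, if_pos hqr]
              split_ifs <;> linarith
            · rw [if_pos ⟨hq, h2⟩, if_neg hqr, if_neg hqr]
              by_cases htouch : r.1 = q.1 ∨ r.1 = q.2 ∨ r.2 = q.1 ∨ r.2 = q.2
              · rw [if_pos htouch]
                have n1 : (0:ℝ) ≤ (if r.1 = q.1 ∧ r.1 < r.2 then t else 0) := by
                  split_ifs <;> linarith
                have n2 : (0:ℝ) ≤ (if r.1 = q.2 ∧ r.1 < r.2 then t else 0) := by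
                  split_ifs <;> linarith
                have n3 : (0:ℝ) ≤ (if r.2 = q.1 ∧ r.1 < r.2 then t else 0) := by
                  split_ifs <;> linarith
                have n4 : (0:ℝ) ≤ (if r.2 = q.2 ∧ r.1 < r.2 then t else 0) := by
                  split_ifs <;> linarith
                rcases htouch with h | h | h | h
                · rw [if_pos (show r.1 = q.1 ∧ r.1 < r.2 from ⟨h, h2⟩)]
                  linarith
                · rw [if_pos (show r.1 = q.2 ∧ r.1 < r.2 from ⟨h, h2⟩)]
                  linarith
                · rw [if_pos (show r.2 = q.1 ∧ r.1 < r.2 from ⟨h, h2⟩)]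
                  linarith
                · rw [if_pos (show r.2 = q.2 ∧ r.1 < r.2 from ⟨h, h2⟩)]
                  linarith
              · rw [if_neg htouch]
                push_neg at htouch
                obtain ⟨b1, b2, b3, b4⟩ := htouch
                simp [hqr, b1, b2, b3, b4]
          · rw [if_neg (fun hc => h2 hc.2)]
            have hr : ¬ r = q := fun hc => h2 (by rw [hc]; exact hq)
            simp [hr, h2]
        calc ∑ r : Fin l × Fin l, g q r
            ≤ ∑ r : Fin l × Fin l, ((if r = q then s else 0)
              + ((if r.1 = q.1 ∧ r.1 < r.2 then t else 0)
                + (if r.1 = q.2 ∧ r.1 < r.2 then t else 0)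
                + (if r.2 = q.1 ∧ r.1 < r.2 then t else 0)
                + (if r.2 = q.2 ∧ r.1 < r.2 then t else 0))) :=
              Finset.sum_le_sum fun r _ => hpt r
          _ ≤ s + 4*((l:ℝ)-1)*t := by
              simp only [Finset.sum_add_distrib]
              have e0 : ∑ r : Fin l × Fin l, (if r = q then s else 0) = s := by
                rw [Finset.sum_ite_eq' Finset.univ q (fun _ => s), if_pos (Finset.mem_univ q)]
              have e1 : ∑ r : Fin l × Fin l, (if r.1 = q.1 ∧ r.1 < r.2 then t else 0)
                  ≤ ((l:ℝ)-1)*t := by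
                rw [Fintype.sum_prod_type]
                have hk : ∀ k : Fin l, ∑ m : Fin l, (if k = q.1 ∧ k < m then t else 0)
                    = if k = q.1 then (∑ m : Fin l, if k < m then t else 0) else 0 := by
                  intro k; by_cases hk : k = q.1 <;> simp [hk]
                rw [Finset.sum_congr rfl fun k _ => hk k,
                  Finset.sum_ite_eq' Finset.univ q.1 _, if_pos (Finset.mem_univ _)]
                exact hsum1 q.1
              have e2 : ∑ r : Fin l × Fin l, (if r.1 = q.2 ∧ r.1 < r.2 then t else 0)
                  ≤ ((l:ℝ)-1)*t := by
                rw [Fintype.sum_prod_type]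
                have hk : ∀ k : Fin l, ∑ m : Fin l, (if k = q.2 ∧ k < m then t else 0)
                    = if k = q.2 then (∑ m : Fin l, if k < m then t else 0) else 0 := by
                  intro k; by_cases hk : k = q.2 <;> simp [hk]
                rw [Finset.sum_congr rfl fun k _ => hk k,
                  Finset.sum_ite_eq' Finset.univ q.2 _, if_pos (Finset.mem_univ _)]
                exact hsum1 q.2
              have e3 : ∑ r : Fin l × Fin l, (if r.2 = q.1 ∧ r.1 < r.2 then t else 0)
                  ≤ ((l:ℝ)-1)*t := by
                rw [Fintype.sum_prod_type]
                have hk : ∀ k : Fin l, ∑ m : Fin l, (if m = q.1 ∧ k < m then t else 0)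
                    = if k < q.1 then t else 0 := by
                  intro k
                  have hm : ∀ m : Fin l, (if m = q.1 ∧ k < m then t else 0)
                      = if m = q.1 then (if k < q.1 then t else 0) else 0 := by
                    intro m; by_cases hmq : m = q.1 <;> simp [hmq]
                  rw [Finset.sum_congr rfl fun m _ => hm m,
                    Finset.sum_ite_eq' Finset.univ q.1 _, if_pos (Finset.mem_univ _)]
                rw [Finset.sum_congr rfl fun k _ => hk k]
                exact hsum2 q.1
              have e4 : ∑ r : Fin l × Fin l, (if r.2 = q.2 ∧ r.1 < r.2 then t else 0)
                  ≤ ((l:ℝ)-1)*t := by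
                rw [Fintype.sum_prod_type]
                have hk : ∀ k : Fin l, ∑ m : Fin l, (if m = q.2 ∧ k < m then t else 0)
                    = if k < q.2 then t else 0 := by
                  intro k
                  have hm : ∀ m : Fin l, (if m = q.2 ∧ k < m then t else 0)
                      = if m = q.2 then (if k < q.2 then t else 0) else 0 := by
                    intro m; by_cases hmq : m = q.2 <;> simp [hmq]
                  rw [Finset.sum_congr rfl fun m _ => hm m,
                    Finset.sum_ite_eq' Finset.univ q.2 _, if_pos (Finset.mem_univ _)]
                rw [Finset.sum_congr rfl fun k _ => hk k]
                exact hsum2 q.2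
              rw [e0]
              linarith
      · rw [if_neg hq]
        have hz : ∀ r : Fin l × Fin l, g q r = 0 := by
          intro r; simp only [hg_def]
          rw [if_neg (fun hc => hq hc.1)]
        rw [Finset.sum_congr rfl fun r _ => hz r, Finset.sum_const_zero]
    calc ∑ q : Fin l × Fin l, ∑ r : Fin l × Fin l, g q r
        ≤ ∑ q : Fin l × Fin l, (if q.1 < q.2 then s + 4*((l:ℝ)-1)*t else 0) :=
          Finset.sum_le_sum fun q _ => hinner q
      _ = C * (s + 4*((l:ℝ)-1)*t) := hcount _
  have hVar_le : variance Z ℙ ≤ C * (s + 4*((l:ℝ)-1)*t) := by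
    rw [hvar_sum]
    exact le_trans (Finset.sum_le_sum fun q _ => Finset.sum_le_sum fun r _ => hterm q r) hg_sum
  -- Chebyshev
  set E : ℝ := ∫ ω, Z ω with hE_def
  have hC : C = (l:ℝ)*((l:ℝ)-1)/2 := by
    rw [hC_def, Nat.cast_choose_two]
  have hCpos : 0 < C := by rw [hC]; nlinarith
  have hEpos : 0 < E := by rw [hEZ_eq]; positivity
  have hcpos : 0 < E * δ / 4 := by positivity
  have hT : C * (1/(n:ℝ)) * (1 + δ/2) ≤ E - E * δ / 4 := by
    have key : (1 + δ/2) ≤ (n:ℝ) * s * (1 - δ/4) := by nlinarith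
    have hE' : E = C * s := hEZ_eq
    rw [hE']
    have h2 : C*(1/(n:ℝ))*(1 + δ/2) ≤ C*(1/(n:ℝ))*((n:ℝ)*s*(1-δ/4)) := by
      apply mul_le_mul_of_nonneg_left key (by positivity)
    have h3 : C*(1/(n:ℝ))*((n:ℝ)*s*(1-δ/4)) = C*s - C*s*δ/4 := by
      field_simp
    linarith
  have hsubset : {ω | Z ω ≤ C * (1/(n:ℝ)) * (1 + δ/2)}
      ⊆ {ω | E * δ / 4 ≤ |Z ω - E|} := by
    intro ω hω
    simp only [Set.mem_setOf_eq] at hω ⊢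
    have h1 : E - Z ω ≤ |Z ω - E| := by
      rw [abs_sub_comm]; exact le_abs_self _
    linarith
  have hvar0 : 0 ≤ variance Z ℙ := variance_nonneg _ _
  have cheb : (ℙ {ω | Z ω ≤ C * (1/(n:ℝ)) * (1 + δ/2)}).toReal
      ≤ variance Z ℙ / (E * δ / 4)^2 := by
    have h1 := meas_ge_le_variance_div_sq (μ := ℙ) hmem hcpos
    have h2 : ℙ {ω | Z ω ≤ C * (1/(n:ℝ)) * (1 + δ/2)}
        ≤ ENNReal.ofReal (variance Z ℙ / (E * δ / 4)^2) := by
      refine le_trans (measure_mono hsubset) ?_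
      convert h1 using 3
    calc (ℙ {ω | Z ω ≤ C * (1/(n:ℝ)) * (1 + δ/2)}).toReal
        ≤ (ENNReal.ofReal (variance Z ℙ / (E * δ / 4)^2)).toReal :=
          ENNReal.toReal_mono ENNReal.ofReal_ne_top h2
      _ = variance Z ℙ / (E * δ / 4)^2 :=
          ENNReal.toReal_ofReal (by positivity)
  refine le_trans cheb ?_
  -- final numeric bound
  have hEinv : 1 ≤ δ^2/512 * E := by
    have h2 := mul_le_mul_of_nonneg_right hEZ (le_of_lt hEpos)
    rwa [one_div, inv_mul_cancel₀ (ne_of_gt hEpos)] at h2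
  have h1 : C * s ≤ δ^2/512 * E^2 := by
    calc C * s = 1*E := by rw [hEZ_eq.symm, one_mul]
      _ ≤ (δ^2/512*E)*E := mul_le_mul_of_nonneg_right hEinv (le_of_lt hEpos)
      _ = δ^2/512 * E^2 := by ring
  have hlpos : (0:ℝ) < l := by linarith
  have h1024 : 1024 * Real.sqrt n ≤ δ^2 * l := by
    rw [div_le_iff₀ hlpos] at hnl
    linarith
  have hkey : 1024 * t ≤ δ^2 * (l:ℝ) * (s*s) := by
    have ha : 1024*t ≤ 1024*(s*Real.sqrt s) := by linarith
    have hb : s*Real.sqrt s*1 ≤ s*Real.sqrt s*(Real.sqrt n*Real.sqrt s) :=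
      mul_le_mul_of_nonneg_left hss1 (le_of_lt (mul_pos hs_pos hsq_pos))
    have he : s*Real.sqrt s*(Real.sqrt n*Real.sqrt s) = Real.sqrt n*(s*s) := by
      calc s*Real.sqrt s*(Real.sqrt n*Real.sqrt s)
          = Real.sqrt n*(s*(Real.sqrt s*Real.sqrt s)) := by ring
        _ = Real.sqrt n*(s*s) := by rw [hsqs]
    rw [he] at hb
    have hd : 1024*(Real.sqrt n*(s*s)) ≤ δ^2*(l:ℝ)*(s*s) := by
      have := mul_le_mul_of_nonneg_right h1024 (mul_nonneg hs0 hs0)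
      linarith
    linarith
  have h2 : C * (4*((l:ℝ)-1)) * t ≤ δ^2/128 * E^2 := by
    have hE' : E = C*s := hEZ_eq
    rw [hE', hC]
    have hmul := mul_le_mul_of_nonneg_left hkey
      (by positivity : (0:ℝ) ≤ (l:ℝ)*((l:ℝ)-1)^2/512)
    calc ((l:ℝ)*((l:ℝ)-1)/2) * (4*((l:ℝ)-1)) * t
        = ((l:ℝ)*((l:ℝ)-1)^2/512) * (1024*t) := by ring
      _ ≤ ((l:ℝ)*((l:ℝ)-1)^2/512) * (δ^2*(l:ℝ)*(s*s)) := hmul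
      _ = δ^2/128 * (((l:ℝ)*((l:ℝ)-1)/2)*s)^2 := by ring
  have hVar_le2 : variance Z ℙ ≤ δ^2/512 * E^2 + δ^2/128 * E^2 := by
    calc variance Z ℙ ≤ C * (s + 4*((l:ℝ)-1)*t) := hVar_le
      _ = C * s + C * (4*((l:ℝ)-1)) * t := by ring
      _ ≤ _ := add_le_add h1 h2
  rw [div_le_iff₀ (by positivity : (0:ℝ) < (E*δ/4)^2)]
  have hfin : δ^2/512 * E^2 + δ^2/128 * E^2 ≤ 1/4 * (E*δ/4)^2 := by
    have hsq := sq_nonneg (E*δ)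
    calc δ^2/512 * E^2 + δ^2/128 * E^2 = (5/512)*(E*δ)^2 := by ring
      _ ≤ (8/512)*(E*δ)^2 := by linarith
      _ = 1/4 * (E*δ/4)^2 := by ring
  linarith [hVar_le2]
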